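/- Let q, r : PMF (Bool × Bool) satisfy the IV inequalities. Then there exists P : PMF (Bool × Bool × Bool) (a triple t = (x, (y₀, y₁)) interpreted as values of (X(z_k), Y(x₀), Y(x₁))) such that P.map Prod.snd = q and, for all j, y : Bool, P {t | t.1 = j ∧ (if j then t.2.2 else t.2.1) = y} = r {(j, y)}. -/

import Mathlib

/-- The probability (as a real number) that a PMF assigns to a set. -/
noncomputable def pr {α : Type*} (p : PMF α) (s : Set α) : ℝ := (p.toOuterMeasure s).toReal

/-- `(q, r)` satisfies the IV inequalities (marg) and (joint), where `q` is a putative joint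
law of the potential outcomes `(Y(x₀), Y(x₁))` and `r` a putative law of `(X, Y)` given
`Z = z`. -/
def SatisfiesIV (q r : PMF (Bool × Bool)) : Prop :=
  (∀ i y : Bool,
    pr q {p | (if i then p.2 else p.1) = y} ≤ pr r {(i, y)} + pr r {p | p.1 = !i}) ∧
  (∀ y y' : Bool, pr q {(y, y')} ≤ pr r {(false, y)} + pr r {(true, y')})

lemma pr_fintype {α : Type*} [Fintype α] (p : PMF α) (s : Set α) [DecidablePred (· ∈ s)] :
    pr p s = ∑ a, if a ∈ s then (p a).toReal else 0 := by
  rw [pr, PMF.toOuterMeasure_apply, tsum_fintype,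
    ENNReal.toReal_sum (fun a _ => by
      refine lt_top_iff_ne_top.mp (lt_of_le_of_lt (Set.indicator_le_self _ _ a) ?_)
      exact lt_top_iff_ne_top.mpr (PMF.apply_ne_top p a))]
  refine Finset.sum_congr rfl fun a _ => ?_
  rw [Set.indicator_apply, apply_ite ENNReal.toReal]
  simp


/-- The single-instrument-level existence lemma at the heart of the completeness direction
`𝒯 ⊆ φ(M₁)` of Theorem 1: if `(q, r)` satisfies the IV inequalities then there is a joint
law `P` of `(X(z_k), Y(x₀), Y(x₁))` with `(Y(x₀), Y(x₁))`-marginal `q` whose induced law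
of `(X(z_k), Y(x_{X(z_k)}))` is `r`. -/
theorem iv_single_level_existence
    (q r : PMF (Bool × Bool)) (hIV : SatisfiesIV q r) :
    ∃ P : PMF (Bool × Bool × Bool),
      P.map Prod.snd = q ∧
      ∀ j y : Bool,
        pr P {t | t.1 = j ∧ (if j then t.2.2 else t.2.1) = y} = pr r {(j, y)} := by
  classical
  obtain ⟨hmarg, hjoint⟩ := hIV
  have m00 := hmarg false false
  have m01 := hmarg false true
  have m10 := hmarg true false
  have m11 := hmarg true true
  have j00 := hjoint false false
  have j01 := hjoint false true
  have j10 := hjoint true false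
  have j11 := hjoint true true
  rw [pr_fintype, pr_fintype, pr_fintype] at m00 m01 m10 m11
  rw [pr_fintype, pr_fintype, pr_fintype] at j00 j01 j10 j11
  simp [Fintype.sum_prod_type, Set.mem_setOf_eq, Prod.mk.injEq] at m00 m01 m10 m11 j00 j01 j10 j11
  have hq1 : (∑ a : Bool × Bool, (q a).toReal) = 1 := by
    rw [← ENNReal.toReal_sum (fun a _ => PMF.apply_ne_top q a), ← tsum_fintype (L := .unconditional _), q.tsum_coe]
    simp
  have hr1 : (∑ a : Bool × Bool, (r a).toReal) = 1 := by
    rw [← ENNReal.toReal_sum (fun a _ => PMF.apply_ne_top r a), ← tsum_fintype (L := .unconditional _), r.tsum_coe]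
    simp
  simp [Fintype.sum_prod_type] at hq1 hr1
  set f00 := (q (false, false)).toReal with hf00
  set f01 := (q (false, true)).toReal with hf01
  set f10 := (q (true, false)).toReal with hf10
  set f11 := (q (true, true)).toReal with hf11
  set g00 := (r (false, false)).toReal with hg00
  set g01 := (r (false, true)).toReal with hg01
  set g10 := (r (true, false)).toReal with hg10
  set g11 := (r (true, true)).toReal with hg11
  have nf00 : 0 ≤ f00 := ENNReal.toReal_nonneg
  have nf01 : 0 ≤ f01 := ENNReal.toReal_nonneg
  have nf10 : 0 ≤ f10 := ENNReal.toReal_nonneg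
  have nf11 : 0 ≤ f11 := ENNReal.toReal_nonneg
  have ng00 : 0 ≤ g00 := ENNReal.toReal_nonneg
  have ng01 : 0 ≤ g01 := ENNReal.toReal_nonneg
  have ng10 : 0 ≤ g10 := ENNReal.toReal_nonneg
  have ng11 : 0 ≤ g11 := ENNReal.toReal_nonneg
  set C := f00 + f10 - g10 with hC
  set s := max (max 0 (g00 - f01)) (C - min f10 g01) with hs
  set t := C - s with ht
  -- bounds
  have hs0 : (0:ℝ) ≤ s := le_max_of_le_left (le_max_left _ _)
  have hs1 : g00 - f01 ≤ s := le_max_of_le_left (le_max_right _ _)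
  have hsmin : C - min f10 g01 ≤ s := le_max_right _ _
  have hs2 : s ≤ f00 := by
    refine max_le (max_le (by linarith) (by linarith)) ?_
    rcases le_total f10 g01 with hm | hm
    · rw [min_eq_left hm]; linarith
    · rw [min_eq_right hm]; linarith
  have hs3 : s ≤ g00 := by
    refine max_le (max_le (by linarith) (by linarith)) ?_
    rcases le_total f10 g01 with hm | hm
    · rw [min_eq_left hm]; linarith
    · rw [min_eq_right hm]; linarith
  have ht0 : 0 ≤ t := by
    have : s ≤ C := by
      refine max_le (max_le (by linarith) (by linarith)) ?_
      have : (0:ℝ) ≤ min f10 g01 := le_min nf10 ng01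
      linarith
    simp only [ht]; linarith
  have ht1 : g01 - f11 ≤ t := by
    have : s ≤ C - (g01 - f11) := by
      refine max_le (max_le (by linarith) (by linarith)) ?_
      have : g01 - f11 ≤ min f10 g01 := le_min (by linarith) (by linarith)
      linarith
    simp only [ht]; linarith
  have ht2 : t ≤ f10 := by
    have := min_le_left f10 g01; simp only [ht]; linarith
  have ht3 : t ≤ g01 := by
    have := min_le_right f10 g01; simp only [ht]; linarith
  -- the coupling masses
  set h : Bool × Bool × Bool → ℝ := fun x =>
    match x with
    | (false, false, false) => s
    | (false, false, true) => g00 - s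
    | (false, true, false) => t
    | (false, true, true) => g01 - t
    | (true, false, false) => f00 - s
    | (true, false, true) => f01 - (g00 - s)
    | (true, true, false) => f10 - t
    | (true, true, true) => f11 - (g01 - t)
    with hh
  have hnn : ∀ x, 0 ≤ h x := by
    rintro ⟨a, b, c⟩
    cases a <;> cases b <;> cases c <;> simp only [hh] <;> linarith
  have hsum1 : (∑ x : Bool × Bool × Bool, h x) = 1 := by
    simp [Fintype.sum_prod_type, hh]; linarith
  refine ⟨PMF.ofFintype (fun x => ENNReal.ofReal (h x)) ?_, ?_, ?_⟩
  · rw [← ENNReal.ofReal_sum_of_nonneg (fun x _ => hnn x), hsum1, ENNReal.ofReal_one]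
  · refine PMF.ext fun x => ?_
    rw [PMF.map_apply, tsum_fintype]
    obtain ⟨a, b⟩ := x
    have key : ∀ (u v : Bool), ENNReal.ofReal (h (true, u, v)) + ENNReal.ofReal (h (false, u, v)) = q (u, v) := by
      intro u v
      rw [← ENNReal.ofReal_add (hnn _) (hnn _)]
      cases u <;> cases v <;> simp only [hh] <;>
        rw [show ∀ x y : ℝ, x - y + y = x from fun x y => by ring] <;>
        first
        | rw [hf00, ENNReal.ofReal_toReal (q.apply_ne_top _)]
        | rw [hf01, ENNReal.ofReal_toReal (q.apply_ne_top _)]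
        | rw [hf10, ENNReal.ofReal_toReal (q.apply_ne_top _)]
        | rw [hf11, ENNReal.ofReal_toReal (q.apply_ne_top _)]
    cases a <;> cases b
    · simpa [Fintype.sum_prod_type, PMF.ofFintype_apply] using key false false
    · simpa [Fintype.sum_prod_type, PMF.ofFintype_apply] using key false true
    · simpa [Fintype.sum_prod_type, PMF.ofFintype_apply] using key true false
    · simpa [Fintype.sum_prod_type, PMF.ofFintype_apply] using key true true
  · intro j y
    rw [pr_fintype, pr_fintype]
    have htor : ∀ x, ((PMF.ofFintype (fun x => ENNReal.ofReal (h x)) (by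
        rw [← ENNReal.ofReal_sum_of_nonneg (fun x _ => hnn x), hsum1, ENNReal.ofReal_one])) x).toReal = h x := by
      intro x; rw [PMF.ofFintype_apply, ENNReal.toReal_ofReal (hnn x)]
    cases j <;> cases y <;>
      simp [Fintype.sum_prod_type, PMF.ofFintype_apply, Set.mem_setOf_eq,
        ENNReal.toReal_ofReal (hnn _), hh, ENNReal.toReal_ofReal hs0, ENNReal.toReal_ofReal ht0,
        ENNReal.toReal_ofReal (show (0:ℝ) ≤ g00 - s by linarith),
        ENNReal.toReal_ofReal (show (0:ℝ) ≤ g01 - t by linarith),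
        ENNReal.toReal_ofReal (show (0:ℝ) ≤ f00 - s by linarith),
        ENNReal.toReal_ofReal (show (0:ℝ) ≤ f10 - t by linarith),
        ENNReal.toReal_ofReal (show (0:ℝ) ≤ f01 - (g00 - s) by linarith),
        ENNReal.toReal_ofReal (show (0:ℝ) ≤ f11 - (g01 - t) by linarith)] <;> linarith
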